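/- arXiv:1007.0326 — 2 statements merged into one kernel-verified Lean document; each statement's English description precedes it below -/
import Mathlib

section
/- Let p be an odd prime, q a power of p, and let η be a normal basis generator of F_{q^{p^n}} over F_q with cyclic Galois group G of order p^n. Then R(η) = Σ_{g∈G} Tr(η·g(η))·g is a square in F_q[G]^×, and it has a square root w fixed by the involution J: g ↦ g^{-1}; moreover w^{-1}∘η is a self-dual normal basis generator of F_{q^{p^n}} over F_q. -/
/-!
The coefficients of `R(η)` form the Gram matrix of the trace form on the basis `gη`, so for
`θ = x ∘ η` the value `Tr(gθ · hθ)` is the coefficient of `h g⁻¹` in `x · J(x) · R(η)`. Hence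
`w⁻¹ ∘ η` is self-dual as soon as `w² = R(η)` and `J(w) = w`. Such a `w` exists because in
characteristic `p` the group algebra of a group of order `p^n` satisfies `y ^ p^n = ε(y) ^ p^n`,
with `ε` the augmentation. Since `ε(R(η)) = Tr(η)²` and `Tr(η) ≠ 0`, `R(η)` is a unit with
`R(η) ^ (2m+1) = d²` for the scalar `d = Tr(η) ^ p^n`, and `w = d · R(η)⁻ᵐ` is a square root
that `J` fixes since it fixes `d` and `R(η)`.
-/

open scoped Classical

open MonoidAlgebra

theorem sq_mul_inv_pow_eq_of_pow_odd {M : Type*} [CommGroup M] {r d : M} {m : ℕ}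
    (h : r ^ (2 * m + 1) = d ^ 2) : (d * (r ^ m)⁻¹) ^ 2 = r := by
  rw [mul_pow, ← h]
  group

namespace MonoidAlgebra

variable {k G : Type*} [CommRing k] [CommGroup G] [Fintype G]

theorem sum_coeff_mul_coeff_eq_coeff_one (y z : MonoidAlgebra k G) :
    ∑ g, y.coeff g * z.coeff g = (y * domCongr k k (MulEquiv.inv G) z).coeff 1 := by
  rw [coeff_mul_apply_left, Finsupp.sum_fintype _ _ (by simp)]
  simp

theorem pow_card_eq_algebraMap {p n : ℕ} [Fact p.Prime] [CharP k p]
    (hG : Fintype.card G = p ^ n) (y : MonoidAlgebra k G) :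
    y ^ p ^ n = algebraMap k _ ((∑ g, y.coeff g) ^ p ^ n) := by
  have : CharP (MonoidAlgebra k G) p :=
    charP_of_injective_algebraMap single_right_injective p
  have hpow (g : G) : g ^ p ^ n = 1 := hG ▸ pow_card_eq_one
  calc y ^ p ^ n = (∑ g, single g (y.coeff g)) ^ p ^ n := by
        rw [← Finsupp.sum_fintype _ _ (by simp), sum_coeff_single]
    _ = ∑ g, algebraMap k _ (y.coeff g ^ p ^ n) := by
      simp only [sum_pow_char_pow, single_pow, hpow, coe_algebraMap]
      rfl
    _ = algebraMap k _ ((∑ g, y.coeff g) ^ p ^ n) := by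
      rw [sum_pow_char_pow, map_sum]

end MonoidAlgebra

section Galois

variable {E F : Type*} [Field E] [Field F] [Algebra E F]

theorem trace_apply_mul_apply (x y : F) (σ τ : F ≃ₐ[E] F) :
    Algebra.trace E F (σ x * τ y) = Algebra.trace E F (x * (σ⁻¹ * τ) y) := by
  rw [← Algebra.trace_eq_of_algEquiv σ⁻¹, map_mul, AlgEquiv.mul_apply, ← AlgEquiv.mul_apply,
    inv_mul_cancel, AlgEquiv.one_apply]

variable [FiniteDimensional E F]

/-- The action `c ∘ y` of `E[Gal(F/E)]` on `F`. -/
noncomputable def galoisAct (c : MonoidAlgebra E (F ≃ₐ[E] F)) (y : F) : F :=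
  ∑ σ, c.coeff σ • σ y

variable (E) in
/-- The element `R(η)`. -/
noncomputable def traceGram (η : F) : MonoidAlgebra E (F ≃ₐ[E] F) :=
  ∑ g, single g (Algebra.trace E F (η * g η))

theorem coeff_traceGram (η : F) (g : F ≃ₐ[E] F) :
    (traceGram E η).coeff g = Algebra.trace E F (η * g η) := by
  simp [traceGram, Finsupp.single_apply]

theorem coeff_traceGram_inv (η : F) (g : F ≃ₐ[E] F) :
    (traceGram E η).coeff g⁻¹ = (traceGram E η).coeff g := by
  rw [coeff_traceGram, coeff_traceGram, ← mul_one g⁻¹, ← trace_apply_mul_apply, mul_comm,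
    AlgEquiv.one_apply]

theorem galoisAct_single_one_mul (g : F ≃ₐ[E] F) (c : MonoidAlgebra E (F ≃ₐ[E] F)) (y : F) :
    galoisAct (single g 1 * c) y = g (galoisAct c y) := by
  simp only [galoisAct, coeff_single_mul_apply, one_mul, map_sum, map_smul]
  exact Fintype.sum_equiv (Equiv.mulLeft g⁻¹) _ _ fun σ => by simp [AlgEquiv.mul_apply]

theorem trace_galoisAct_mul_apply (c : MonoidAlgebra E (F ≃ₐ[E] F)) (η : F) (τ : F ≃ₐ[E] F) :
    Algebra.trace E F (galoisAct c η * τ η) = (c * traceGram E η).coeff τ := by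
  rw [coeff_mul_apply_left, Finsupp.sum_fintype _ _ (by simp), galoisAct, Finset.sum_mul,
    map_sum]
  simp only [smul_mul_assoc, map_smul, smul_eq_mul, trace_apply_mul_apply, coeff_traceGram]

theorem trace_galoisAct_mul_galoisAct (c c' : MonoidAlgebra E (F ≃ₐ[E] F)) (η : F) :
    Algebra.trace E F (galoisAct c η * galoisAct c' η) =
      ∑ τ, (c * traceGram E η).coeff τ * c'.coeff τ := by
  rw [show galoisAct c' η = ∑ τ, c'.coeff τ • τ η from rfl, Finset.mul_sum, map_sum]
  simp only [mul_smul_comm, map_smul, smul_eq_mul, trace_galoisAct_mul_apply, mul_comm]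

variable [IsGalois E F]

theorem sum_coeff_traceGram (η : F) :
    ∑ g, (traceGram E η).coeff g = Algebra.trace E F η ^ 2 := by
  simp only [coeff_traceGram, ← map_sum, ← Finset.mul_sum, ← trace_eq_sum_automorphisms]
  rw [mul_comm, ← Algebra.smul_def, map_smul, smul_eq_mul, sq]

theorem trace_ne_zero_of_basis {η : F} (b : Module.Basis (F ≃ₐ[E] F) E F)
    (hb : ∀ g, b g = g η) : Algebra.trace E F η ≠ 0 := by
  intro h
  have hsum : ∑ g, (1 : E) • b g = 0 := by
    simp only [one_smul, hb, ← trace_eq_sum_automorphisms, h, map_zero]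
  exact one_ne_zero (Fintype.linearIndependent_iff.mp b.linearIndependent _ hsum 1)

end Galois

section FiniteField

variable {E F : Type*} [Field E] [Field F] [Finite F] [Algebra E F]

attribute [local instance] IsCyclic.commGroup

local notation "J" => domCongr E E (MulEquiv.inv (F ≃ₐ[E] F))

theorem domCongr_inv_traceGram (η : F) : J (traceGram E η) = traceGram E η := by
  ext g
  simp [coeff_traceGram_inv]

theorem trace_apply_galoisAct_mul_apply_galoisAct {η : F} {x : MonoidAlgebra E (F ≃ₐ[E] F)}
    (hJx : J x = x) (hx : x * x * traceGram E η = 1) (g h : F ≃ₐ[E] F) :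
    Algebra.trace E F (g (galoisAct x η) * h (galoisAct x η)) = if g = h then 1 else 0 := by
  rw [← galoisAct_single_one_mul, ← galoisAct_single_one_mul, trace_galoisAct_mul_galoisAct,
    sum_coeff_mul_coeff_eq_coeff_one, map_mul, hJx, domCongr_single, MulEquiv.inv_apply,
    show single g 1 * x * traceGram E η * (single h⁻¹ 1 * x) =
      single g 1 * single h⁻¹ 1 * (x * x * traceGram E η) by ring,
    hx, mul_one, single_mul_single, mul_one, coeff_single, Finsupp.single_apply]
  simp [mul_inv_eq_one]

theorem exists_sq_eq_traceGram {p n : ℕ} [Fact p.Prime] [CharP E p] (hodd : Odd (p ^ n))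
    (hG : Fintype.card (F ≃ₐ[E] F) = p ^ n) {η : F} (hη : Algebra.trace E F η ≠ 0) :
    ∃ w : (MonoidAlgebra E (F ≃ₐ[E] F))ˣ, (w : MonoidAlgebra E _) ^ 2 = traceGram E η ∧
      Units.map (J : MonoidAlgebra E (F ≃ₐ[E] F) →* _) w = w := by
  obtain ⟨m, hm⟩ := hodd
  have hpow : traceGram E η ^ p ^ n = algebraMap E _ (Algebra.trace E F η ^ p ^ n) ^ 2 := by
    rw [pow_card_eq_algebraMap hG, sum_coeff_traceGram, ← map_pow (algebraMap E _), ← pow_mul,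
      ← pow_mul, mul_comm]
  let d : (MonoidAlgebra E (F ≃ₐ[E] F))ˣ :=
    Units.map (algebraMap E _).toMonoidHom (Units.mk0 _ (pow_ne_zero (p ^ n) hη))
  have hR : IsUnit (traceGram E η) := by
    rw [← isUnit_pow_iff (pow_ne_zero n (Fact.out : p.Prime).ne_zero), hpow]
    exact (d ^ 2).isUnit
  refine ⟨d * (hR.unit ^ m)⁻¹, ?_, ?_⟩
  · have hRd : hR.unit ^ (2 * m + 1) = d ^ 2 := Units.ext <| by
      simpa [← hm, d] using hpow
    simpa using congrArg Units.val (sq_mul_inv_pow_eq_of_pow_odd hRd)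
  · have hJd : Units.map (J : MonoidAlgebra E (F ≃ₐ[E] F) →* _) d = d :=
      Units.ext (AlgEquiv.commutes _ _)
    have hJR : Units.map (J : MonoidAlgebra E (F ≃ₐ[E] F) →* _) hR.unit = hR.unit :=
      Units.ext (domCongr_inv_traceGram η)
    rw [map_mul, map_inv, map_pow, hJd, hJR]

end FiniteField

theorem stmt_9_general (p n : ℕ) [Fact p.Prime] (hp : Odd p)
    (E F : Type*) [Field E] [Field F] [Fintype F]
    [Algebra E F] [CharP E p]
    (hdeg : Module.finrank E F = p ^ n)
    (η : F) (b : Module.Basis (F ≃ₐ[E] F) E F) (hb : ∀ g : F ≃ₐ[E] F, b g = g η) :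
    ∃ w : (MonoidAlgebra E (F ≃ₐ[E] F))ˣ,
      (w : MonoidAlgebra E (F ≃ₐ[E] F)) * (w : MonoidAlgebra E (F ≃ₐ[E] F)) =
        (∑ g : F ≃ₐ[E] F, MonoidAlgebra.single g (Algebra.trace E F (η * g η))) ∧
      (∀ g : F ≃ₐ[E] F,
        (w : MonoidAlgebra E (F ≃ₐ[E] F)).coeff g⁻¹ = (w : MonoidAlgebra E (F ≃ₐ[E] F)).coeff g) ∧
      ∀ g h : F ≃ₐ[E] F,
        Algebra.trace E F
            (g (∑ σ : F ≃ₐ[E] F,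
                ((w⁻¹ : (MonoidAlgebra E (F ≃ₐ[E] F))ˣ) : MonoidAlgebra E (F ≃ₐ[E] F)).coeff σ • σ η) *
             h (∑ σ : F ≃ₐ[E] F,
                ((w⁻¹ : (MonoidAlgebra E (F ≃ₐ[E] F))ˣ) : MonoidAlgebra E (F ≃ₐ[E] F)).coeff σ • σ η)) =
          if g = h then 1 else 0 := by
  let : CommGroup (F ≃ₐ[E] F) := IsCyclic.commGroup
  have hcard : Fintype.card (F ≃ₐ[E] F) = p ^ n := by
    rw [← Nat.card_eq_fintype_card, IsGalois.card_aut_eq_finrank, hdeg]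
  obtain ⟨w, hw, hJw⟩ := exists_sq_eq_traceGram hp.pow hcard (trace_ne_zero_of_basis b hb)
  have hJw_inv : Units.map (domCongr E E (MulEquiv.inv (F ≃ₐ[E] F)) :
      MonoidAlgebra E (F ≃ₐ[E] F) →* _) w⁻¹ = w⁻¹ := by
    rw [map_inv, hJw]
  have hw_inv : (w⁻¹ * w⁻¹ : MonoidAlgebra E (F ≃ₐ[E] F)) * traceGram E η = 1 := by
    rw [← hw]
    simp [sq, mul_assoc]
  refine ⟨w, by rw [← sq, hw]; rfl, fun g => ?_, fun g h => ?_⟩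
  · simpa using
      congrArg (fun u : (MonoidAlgebra E (F ≃ₐ[E] F))ˣ ↦ (u : MonoidAlgebra E _).coeff g) hJw
  · convert trace_apply_galoisAct_mul_apply_galoisAct (congrArg Units.val hJw_inv) hw_inv g h
      <;> rfl

/-- Let `p` be an odd prime, `q` a power of `p`, and `η` a normal basis
generator of `F_{q^{p^n}}/F_q` with Galois group `G` (cyclic of order `p^n`). Then
`R(η) = Σ_g Tr(η·g(η))·g` is a square in `F_q[G]ˣ` with a square root `w` fixed by the
involution `J : g ↦ g⁻¹`, and `w⁻¹ ∘ η` is a self-dual normal basis generator. -/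
theorem stmt_9 (p n : ℕ) [Fact p.Prime] (hp : Odd p)
    (E F : Type*) [Field E] [Field F] [Fintype E] [Fintype F]
    [Algebra E F] [IsGalois E F] [CharP E p]
    (hdeg : Module.finrank E F = p ^ n)
    (η : F) (b : Module.Basis (F ≃ₐ[E] F) E F) (hb : ∀ g : F ≃ₐ[E] F, b g = g η) :
    ∃ w : (MonoidAlgebra E (F ≃ₐ[E] F))ˣ,
      (w : MonoidAlgebra E (F ≃ₐ[E] F)) * (w : MonoidAlgebra E (F ≃ₐ[E] F)) =
        (∑ g : F ≃ₐ[E] F, MonoidAlgebra.single g (Algebra.trace E F (η * g η))) ∧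
      (∀ g : F ≃ₐ[E] F,
        (w : MonoidAlgebra E (F ≃ₐ[E] F)).coeff g⁻¹ = (w : MonoidAlgebra E (F ≃ₐ[E] F)).coeff g) ∧
      ∀ g h : F ≃ₐ[E] F,
        Algebra.trace E F
            (g (∑ σ : F ≃ₐ[E] F,
                ((w⁻¹ : (MonoidAlgebra E (F ≃ₐ[E] F))ˣ) : MonoidAlgebra E (F ≃ₐ[E] F)).coeff σ • σ η) *
             h (∑ σ : F ≃ₐ[E] F,
                ((w⁻¹ : (MonoidAlgebra E (F ≃ₐ[E] F))ˣ) : MonoidAlgebra E (F ≃ₐ[E] F)).coeff σ • σ η)) =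
          if g = h then 1 else 0 :=
  stmt_9_general p n hp E F hdeg η b hb
end

section
/- Let K be a p-adic field, L/K weakly ramified abelian of odd degree, and L'/L a finite unramified extension with L'/K abelian and weakly ramified. Then Tr_{L'/L}(A_{L'/K}) ⊆ A_{L/K}; in fact A_{L'/K} = A_{L/K}·O_{L'}. Consequently, if x' is a self-dual integral normal basis generator of A_{L'/K}, then Tr_{L'/L}(x') is a self-dual integral normal basis generator of A_{L/K}. -/
/-!
Write `D⁻¹_{M/K}` for the trace dual of `O_M`. Transitivity of the trace together with
`D⁻¹_{L'/L} = O_{L'}` gives `D⁻¹_{L'/K} = D⁻¹_{L/K} · O_{L'}`, i.e. `A'² = (A · O_{L'})²`.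
Since `D⁻¹_{L'/K}` is invertible, squaring can be cancelled: a fractional ideal `X` with
`X² = 1` consists of elements with integral square, so `X = 1`. Hence `A' = A · O_{L'}`, and
`Tr_{L'/L}(A · O_{L'}) ⊆ A · Tr_{L'/L}(O_{L'}) ⊆ A`.

For a self-dual `x'`, lift `g, h ∈ Gal(L/K)` to `Gal(L'/K)`; writing `Tr_{L'/L}` as a sum
over `Gal(L'/L)` turns `Tr_{L/K}(g x · h x)` for `x = Tr_{L'/L} x'` into a sum of pairings of
conjugates of `x'`, of which exactly one is nonzero if `g = h` and none otherwise. Finally a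
self-dual `x` whose conjugates lie in `A` generates `A` over `O_K`, because
`z = ∑_g Tr(z · g x) g x`.
-/

open scoped Classical

namespace Submodule

variable {R S : Type*} [CommRing R] [CommRing S] [Algebra R S]

theorem le_one_of_mul_self_le_one {X : Submodule (integralClosure R S) S} (h : X * X ≤ 1) :
    X ≤ 1 := by
  intro x hx
  obtain ⟨y, hy⟩ := mem_one.mp (h (mul_mem_mul hx hx))
  have hx2 : IsIntegral R (x ^ 2) := by rw [sq, ← hy]; exact y.2
  exact mem_one.mpr ⟨⟨x, hx2.of_pow two_pos⟩, rfl⟩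

theorem eq_one_of_mul_self_eq_one {X : Submodule (integralClosure R S) S} (h : X * X = 1) :
    X = 1 := by
  have hX := le_one_of_mul_self_le_one h.le
  refine le_antisymm hX ?_
  calc 1 = X * X := h.symm
    _ ≤ X * 1 := by gcongr
    _ = X := mul_one X

theorem eq_of_mul_self_eq_mul_self {X Y E : Submodule (integralClosure R S) S}
    (h : X * X = Y * Y) (hE : X * X * E = 1) : X = Y := by
  have hXYE : X * (Y * E) = 1 := eq_one_of_mul_self_eq_one <|
    calc X * (Y * E) * (X * (Y * E)) = X * X * E * (Y * Y * E) := by ring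
      _ = 1 := by rw [← h, hE, one_mul]
  calc X = X * (X * (Y * E)) := by rw [hXYE, mul_one]
    _ = X * X * E * Y := by ring
    _ = Y := by rw [hE, one_mul]

end Submodule

section InverseDifferent

variable (R K M : Type*) [CommRing R] [Field K] [Field M] [Algebra R K] [Algebra K M]
  [Algebra R M]

def inverseDifferent : Submodule (integralClosure R M) M where
  carrier := {z | ∀ y ∈ integralClosure R M, Algebra.trace K M (z * y) ∈ integralClosure R K}
  add_mem' {z w} hz hw y hy := by
    rw [add_mul, map_add]
    exact add_mem (hz y hy) (hw y hy)
  zero_mem' y _ := by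
    rw [zero_mul, map_zero]
    exact zero_mem _
  smul_mem' o z hz y hy := by
    rw [Subalgebra.smul_def, smul_eq_mul, mul_assoc, mul_left_comm]
    exact hz _ (mul_mem o.2 hy)

theorem one_le_inverseDifferent [IsScalarTower R K M] [FiniteDimensional K M] :
    1 ≤ inverseDifferent R K M := by
  intro z hz y hy
  obtain ⟨o, rfl⟩ := Submodule.mem_one.mp hz
  exact Algebra.isIntegral_trace (o.2.mul hy)

theorem isFractional_inverseDifferent [IsScalarTower R K M] [IsDomain R]
    [Algebra.IsAlgebraic R M] [FaithfulSMul R M] [FiniteDimensional K M] [Algebra.IsSeparable K M] :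
    IsFractional (nonZeroDivisors (integralClosure R M)) (inverseDifferent R K M) := by
  let b := Module.finBasis K M
  let db := (Algebra.traceForm K M).dualBasis (traceForm_nondegenerate K M) b
  obtain ⟨y, hy0, hy⟩ := Algebra.IsAlgebraic.exists_integral_multiples R
    (Finset.univ.image b ∪ Finset.univ.image db)
  have hyb i : IsIntegral R (y • b i) := hy _ (by simp)
  have hydb i : IsIntegral R (y • db i) := hy _ (by simp)
  refine ⟨algebraMap R _ (y * y), mem_nonZeroDivisors_of_ne_zero ?_, fun z hz => ?_⟩
  · rw [Ne, ← Subtype.coe_inj]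
    simpa using hy0
  -- the coefficients of `z` in the dual basis are the traces `Tr(z * b i)`
  have hz_eq : (y * y) • z = ∑ i, Algebra.trace K M (z * y • b i) • (y • db i) := by
    conv_lhs => rw [← db.sum_repr z, Finset.smul_sum]
    refine Finset.sum_congr rfl fun i _ => ?_
    simp only [db, LinearMap.BilinForm.dualBasis_repr_apply, Algebra.traceForm_apply,
      mul_smul_comm, LinearMap.map_smul_of_tower, mul_smul]
    rw [smul_assoc, smul_comm (Algebra.trace K M (z * b i)) y]
  refine ⟨⟨(y * y) • z, ?_⟩, by simp [Algebra.smul_def]⟩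
  rw [hz_eq]
  refine IsIntegral.sum _ fun i _ => ?_
  rw [Algebra.smul_def]
  exact ((hz _ (hyb i)).algebraMap).mul (hydb i)

end InverseDifferent

theorem exists_inverseDifferent_mul_eq_one (R F K M : Type*) [CommRing R] [IsDedekindDomain R]
    [Field F] [CharZero F] [Algebra R F] [IsFractionRing R F]
    [Field K] [Algebra F K] [FiniteDimensional F K] [Algebra R K] [IsScalarTower R F K]
    [Field M] [Algebra K M] [FiniteDimensional K M] [Algebra R M] [IsScalarTower R K M] :
    ∃ E, inverseDifferent R K M * E = 1 := by
  let : Algebra F M := ((algebraMap K M).comp (algebraMap F K)).toAlgebra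
  have : IsScalarTower F K M := .of_algebraMap_eq fun _ => rfl
  have hRFM : IsScalarTower R F M := .of_algebraMap_eq fun x => by
    rw [IsScalarTower.algebraMap_apply R K M, IsScalarTower.algebraMap_apply R F K]
    rfl
  have : FiniteDimensional F M := Module.Finite.trans K M
  have : CharZero K := charZero_of_injective_algebraMap (algebraMap F K).injective
  have : IsDedekindDomain (integralClosure R M) := integralClosure.isDedekindDomain R F M
  have : IsFractionRing (integralClosure R M) M :=
    integralClosure.isFractionRing_of_finite_extension F M
  have : Algebra.IsAlgebraic R M :=
    have := IsLocalization.isAlgebraic F (nonZeroDivisors R)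
    .trans R F M
  have : FaithfulSMul R M := (faithfulSMul_iff_algebraMap_injective R M).mpr <| by
    rw [hRFM.algebraMap_eq]
    exact (algebraMap F M).injective.comp (IsFractionRing.injective R F)
  let D : FractionalIdeal (nonZeroDivisors (integralClosure R M)) M :=
    ⟨_, isFractional_inverseDifferent R K M⟩
  have hD : D ≠ 0 := fun h => by
    have h1 : (1 : M) ∈ inverseDifferent R K M :=
      Submodule.one_le.mp (one_le_inverseDifferent R K M)
    change (1 : M) ∈ (D : Submodule (integralClosure R M) M) at h1
    simp [h] at h1
  refine ⟨(D⁻¹ : FractionalIdeal _ M), ?_⟩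
  change (D : Submodule (integralClosure R M) M) * _ = 1
  rw [← FractionalIdeal.coe_mul, mul_inv_cancel₀ hD, FractionalIdeal.coe_one]

section Tower

variable {R L : Type*} (L' : Type*) [CommRing R] [Field L] [Field L']
  [Algebra R L] [Algebra R L'] [Algebra L L']

def extendedSpan (I : Submodule (integralClosure R L) L) : Submodule (integralClosure R L') L' :=
  Submodule.span _ (algebraMap L L' '' I)

variable {L'}

theorem extendedSpan_mul (I J : Submodule (integralClosure R L) L) :
    extendedSpan L' (I * J) = extendedSpan L' I * extendedSpan L' J := by
  rw [extendedSpan, extendedSpan, extendedSpan, Submodule.span_mul_span]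
  apply le_antisymm
  · rw [Submodule.span_le]
    rintro _ ⟨w, hw, rfl⟩
    refine Submodule.mul_induction_on hw (fun m hm n hn => ?_) fun _ _ hx hy => ?_
    · rw [map_mul]
      exact Submodule.subset_span (Set.mul_mem_mul ⟨m, hm, rfl⟩ ⟨n, hn, rfl⟩)
    · rw [map_add]
      exact add_mem hx hy
  · rw [Submodule.span_le]
    rintro _ ⟨_, ⟨a, ha, rfl⟩, _, ⟨b, hb, rfl⟩, rfl⟩
    beta_reduce
    rw [← map_mul]
    exact Submodule.subset_span ⟨a * b, Submodule.mul_mem_mul ha hb, rfl⟩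

theorem trace_mul_mem_of_mem_extendedSpan [IsScalarTower R L L'] [FiniteDimensional L L']
    {I : Submodule (integralClosure R L) L} {z : L'} (hz : z ∈ extendedSpan L' I) :
    ∀ y ∈ integralClosure R L', Algebra.trace L L' (z * y) ∈ I := by
  induction hz using Submodule.span_induction with
  | mem _ h =>
    obtain ⟨a, ha, rfl⟩ := h
    intro y hy
    rw [← Algebra.smul_def, map_smul, smul_eq_mul, mul_comm]
    exact I.smul_mem ⟨_, Algebra.isIntegral_trace hy⟩ ha
  | zero => simp
  | add _ _ _ _ hz hw =>
    intro y hy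
    rw [add_mul, map_add]
    exact add_mem (hz y hy) (hw y hy)
  | smul o _ _ hz =>
    intro y hy
    rw [Subalgebra.smul_def, smul_eq_mul, mul_assoc, mul_left_comm]
    exact hz _ (mul_mem o.2 hy)

theorem mem_extendedSpan_of_trace_mul_mem
    (hunr : inverseDifferent R L L' ≤ 1) {I E : Submodule (integralClosure R L) L}
    (hIE : I * E = 1) {u : L'}
    (hu : ∀ y ∈ integralClosure R L', Algebra.trace L L' (u * y) ∈ I) :
    u ∈ extendedSpan L' I := by
  have key : ∀ w ∈ I * E, algebraMap L L' w * u ∈ extendedSpan L' I := by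
    intro w hw
    refine Submodule.mul_induction_on hw (fun m hm e he => ?_) fun _ _ hx hy => ?_
    · -- `Tr(e u y) = e Tr(u y) ∈ E I = O_L`, so `e u ∈ D⁻¹_{L'/L} ⊆ O_{L'}`
      have heu : algebraMap L L' e * u ∈ integralClosure R L' := by
        have hdual : algebraMap L L' e * u ∈ inverseDifferent R L L' := fun y hy => by
          obtain ⟨o, ho⟩ := Submodule.mem_one.mp (hIE ▸ Submodule.mul_mem_mul (hu y hy) he)
          rw [mul_assoc, ← Algebra.smul_def, map_smul, smul_eq_mul, mul_comm, ← ho]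
          exact o.2
        obtain ⟨o, ho⟩ := Submodule.mem_one.mp (hunr hdual)
        exact ho ▸ o.2
      have : algebraMap L L' (m * e) * u =
          (⟨_, heu⟩ : integralClosure R L') • algebraMap L L' m := by
        rw [map_mul, Subalgebra.smul_def, smul_eq_mul]
        ring
      rw [this]
      exact Submodule.smul_mem _ _ (Submodule.subset_span ⟨m, hm, rfl⟩)
    · rw [map_add, add_mul]
      exact add_mem hx hy
  simpa using key 1 (hIE ▸ Submodule.one_le.mp le_rfl)

variable [IsScalarTower R L L'] {K : Type*} [Field K] [Algebra R K] [Algebra K L] [Algebra K L']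
  [IsScalarTower K L L']

theorem mem_inverseDifferent_iff_forall_trace_mem [FiniteDimensional K L]
    [FiniteDimensional L L'] {u : L'} : u ∈ inverseDifferent R K L' ↔
      ∀ y ∈ integralClosure R L', Algebra.trace L L' (u * y) ∈ inverseDifferent R K L := by
  refine ⟨fun hu y hy w hw => ?_, fun hu y hy => ?_⟩
  · have : Algebra.trace L L' (u * y) * w = Algebra.trace L L' (u * (y * algebraMap L L' w)) := by
      rw [mul_comm, ← smul_eq_mul, ← map_smul, Algebra.smul_def, mul_comm, mul_assoc]
    rw [this, Algebra.trace_trace]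
    exact hu _ (mul_mem hy hw.algebraMap)
  · simpa [Algebra.trace_trace] using hu y hy 1 (one_mem _)

theorem inverseDifferent_eq_extendedSpan [FiniteDimensional K L] [FiniteDimensional L L']
    (hunr : inverseDifferent R L L' ≤ 1) {E : Submodule (integralClosure R L) L}
    (hE : inverseDifferent R K L * E = 1) :
    inverseDifferent R K L' = extendedSpan L' (inverseDifferent R K L) := by
  ext u
  rw [mem_inverseDifferent_iff_forall_trace_mem (L := L)]
  exact ⟨mem_extendedSpan_of_trace_mul_mem hunr hE, trace_mul_mem_of_mem_extendedSpan⟩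

end Tower

section Galois

variable {K L L' : Type*} [Field K] [Field L] [Field L'] [Algebra K L] [Algebra K L']
  [Algebra L L'] [IsScalarTower K L L']

theorem trace_algEquiv_apply [Normal K L] (σ : L' ≃ₐ[K] L') (z : L') :
    Algebra.trace L L' (σ z) = σ.restrictNormal L (Algebra.trace L L' z) := by
  rw [Algebra.trace_eq_of_equiv_equiv (σ.restrictNormal L).toRingEquiv σ.toRingEquiv
    (RingHom.ext fun c => σ.restrictNormal_commutes L c) z]
  simp

theorem trace_trace_mul_trace [FiniteDimensional K L] [FiniteDimensional L L'] [IsGalois L L']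
    (a b : L') :
    Algebra.trace K L (Algebra.trace L L' a * Algebra.trace L L' b) =
      ∑ s : L' ≃ₐ[L] L', Algebra.trace K L' (s a * b) := by
  rw [← smul_eq_mul, ← map_smul, Algebra.smul_def, Algebra.trace_trace,
    trace_eq_sum_automorphisms, Finset.sum_mul, map_sum]

theorem AlgEquiv.restrictNormal_restrictScalars_mul [Normal K L] (s : L' ≃ₐ[L] L')
    (σ : L' ≃ₐ[K] L') :
    (s.restrictScalars K * σ).restrictNormal L = σ.restrictNormal L := by
  ext c
  apply (algebraMap L L').injective
  rw [AlgEquiv.restrictNormal_commutes, AlgEquiv.restrictNormal_commutes,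
    AlgEquiv.mul_apply, ← AlgEquiv.restrictNormal_commutes σ L c]
  exact s.commutes _

theorem AlgEquiv.restrictScalars_mul_eq_self_iff (s : L' ≃ₐ[L] L') (σ : L' ≃ₐ[K] L') :
    s.restrictScalars K * σ = σ ↔ s = 1 := by
  rw [mul_eq_right]
  exact (AlgEquiv.restrictScalars_injective K).eq_iff' rfl

variable (K) in
def IsSelfDual (M : Type*) [Field M] [Algebra K M] (x : M) : Prop :=
  ∀ g h : M ≃ₐ[K] M, Algebra.trace K M (g x * h x) = if g = h then 1 else 0

theorem IsSelfDual.trace [FiniteDimensional K L'] [IsGalois K L'] [IsGalois K L] {x' : L'}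
    (hx' : IsSelfDual K L' x') : IsSelfDual K L (Algebra.trace L L' x') := by
  have : FiniteDimensional L L' := Module.Finite.of_restrictScalars_finite K L L'
  have : FiniteDimensional K L := Module.Finite.left K L L'
  have : IsGalois L L' := IsGalois.tower_top_of_isGalois K L L'
  choose lift hlift using AlgEquiv.restrictNormalHom_surjective (F := K) (K₁ := L) (E := L')
  have htr g : g (Algebra.trace L L' x') = Algebra.trace L L' (lift g x') := by
    rw [trace_algEquiv_apply]
    conv_lhs => rw [← hlift g]
    rfl
  intro g h
  have hsum : ∀ s : L' ≃ₐ[L] L', Algebra.trace K L' (s (lift g x') * lift h x') =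
      if s.restrictScalars K * lift g = lift h then 1 else 0 :=
    fun s => hx' (s.restrictScalars K * lift g) (lift h)
  rw [htr, htr, trace_trace_mul_trace, Finset.sum_congr rfl fun s _ => hsum s]
  by_cases hgh : g = h
  · subst hgh
    simp_rw [AlgEquiv.restrictScalars_mul_eq_self_iff]
    simp
  · -- restricting `s * lift g = lift h` to `L` would give `g = h`
    have hne (s : L' ≃ₐ[L] L') : s.restrictScalars K * lift g ≠ lift h := fun heq => hgh <| by
      have := congrArg (AlgEquiv.restrictNormal · L) heq
      rw [AlgEquiv.restrictNormal_restrictScalars_mul] at this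
      exact (hlift g).symm.trans (this.trans (hlift h))
    simp [hne, hgh]

end Galois

namespace IsSelfDual

variable {K M : Type*} [Field K] [Field M] [Algebra K M] [FiniteDimensional K M] {x : M}

theorem trace_sum_smul_mul (hx : IsSelfDual K M x) (c : (M ≃ₐ[K] M) → K) (h : M ≃ₐ[K] M) :
    Algebra.trace K M ((∑ g, c g • g x) * h x) = c h := by
  simp [Finset.sum_mul, hx _ h]

theorem linearIndependent (hx : IsSelfDual K M x) :
    LinearIndependent K fun g : M ≃ₐ[K] M => g x := by
  rw [Fintype.linearIndependent_iff]
  intro c hc h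
  simpa [hc] using (hx.trace_sum_smul_mul c h).symm

theorem sum_trace_mul_smul [IsGalois K M] (hx : IsSelfDual K M x) (z : M) :
    ∑ g : M ≃ₐ[K] M, Algebra.trace K M (z * g x) • g x = z := by
  have hcard : Fintype.card (M ≃ₐ[K] M) = Module.finrank K M :=
    Fintype.card_eq_nat_card.trans (IsGalois.card_aut_eq_finrank K M)
  let b := basisOfLinearIndependentOfCardEqFinrank hx.linearIndependent hcard
  have hz : z = ∑ g, b.repr z g • g x := by
    simpa [b] using (b.sum_repr z).symm
  have hc h : Algebra.trace K M (z * h x) = b.repr z h := by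
    conv_lhs => rw [hz]
    exact hx.trace_sum_smul_mul _ h
  simp_rw [hc]
  exact hz.symm

end IsSelfDual

section OrbitSpan

variable (R K : Type*) {M : Type*} [CommRing R] [Field K] [Field M] [Algebra R K] [Algebra K M]
  [FiniteDimensional K M]

def orbitSpan (x : M) : Set M :=
  {z | ∃ c : (M ≃ₐ[K] M) → K, (∀ g, c g ∈ integralClosure R K) ∧ z = ∑ g, c g • g x}

theorem apply_mem_orbitSpan (x : M) (g : M ≃ₐ[K] M) : g x ∈ orbitSpan R K x := by
  refine ⟨fun σ => if σ = g then 1 else 0, fun σ => ?_, by simp [ite_smul]⟩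
  beta_reduce
  split_ifs
  exacts [one_mem _, zero_mem _]

variable {R K} [Algebra R M] [IsScalarTower R K M]

theorem coe_eq_orbitSpan_of_isSelfDual [IsGalois K M] {A : Submodule (integralClosure R M) M}
    (hA : A * A ≤ inverseDifferent R K M) {x : M} (hx : IsSelfDual K M x)
    (hgx : ∀ g : M ≃ₐ[K] M, g x ∈ A) : (A : Set M) = orbitSpan R K x := by
  ext z
  constructor
  · intro hz
    refine ⟨fun g => Algebra.trace K M (z * g x), fun g => ?_, (hx.sum_trace_mul_smul z).symm⟩
    simpa using hA (Submodule.mul_mem_mul hz (hgx g)) 1 (one_mem _)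
  · rintro ⟨c, hc, rfl⟩
    refine Submodule.sum_mem _ fun g _ => ?_
    have : c g • g x =
        (⟨algebraMap K M (c g), (hc g).algebraMap⟩ : integralClosure R M) • g x := by
      rw [Algebra.smul_def, Subalgebra.smul_def, smul_eq_mul]
    rw [this]
    exact A.smul_mem _ (hgx g)

end OrbitSpan

theorem stmt_19_general (p : ℕ) [Fact p.Prime]
    (K : Type*) [Field K] [Algebra ℚ_[p] K] [FiniteDimensional ℚ_[p] K]
    [Algebra ℤ_[p] K] [IsScalarTower ℤ_[p] ℚ_[p] K]
    (L : Type*) [Field L] [Algebra K L] [FiniteDimensional K L] [IsGalois K L]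
    [Algebra ℤ_[p] L] [IsScalarTower ℤ_[p] K L]
    (L' : Type*) [Field L'] [Algebra K L'] [Algebra L L'] [IsScalarTower K L L']
    [FiniteDimensional K L'] [IsGalois K L']
    [Algebra ℤ_[p] L'] [IsScalarTower ℤ_[p] K L'] [IsScalarTower ℤ_[p] L L']
    -- `L'/L` is unramified: the trace dual of `O_{L'}` over `L` is `O_{L'}` itself
    (hunram : ∀ z : L',
      (∀ y : L', y ∈ integralClosure ℤ_[p] L' →
        Algebra.trace L L' (z * y) ∈ integralClosure ℤ_[p] L) ↔
      z ∈ integralClosure ℤ_[p] L')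
    (A : Submodule (integralClosure ℤ_[p] L) L)
    (hA : ∀ z : L, z ∈ A * A ↔
      ∀ y : L, y ∈ integralClosure ℤ_[p] L →
        Algebra.trace K L (z * y) ∈ integralClosure ℤ_[p] K)
    (A' : Submodule (integralClosure ℤ_[p] L') L')
    (hA' : ∀ z : L', z ∈ A' * A' ↔
      ∀ y : L', y ∈ integralClosure ℤ_[p] L' →
        Algebra.trace K L' (z * y) ∈ integralClosure ℤ_[p] K) :
    (∀ z : L', z ∈ A' → Algebra.trace L L' z ∈ A) ∧
    ((A' : Set L') =
      ↑(Submodule.span (integralClosure ℤ_[p] L') (algebraMap L L' '' (A : Set L)))) ∧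
    ∀ x' : L', x' ∈ A' →
      ((A' : Set L') = {z : L' | ∃ c : (L' ≃ₐ[K] L') → K,
        (∀ g, c g ∈ integralClosure ℤ_[p] K) ∧
        z = ∑ g : L' ≃ₐ[K] L', c g • g x'}) →
      (∀ g h : L' ≃ₐ[K] L',
        Algebra.trace K L' (g x' * h x') = if g = h then 1 else 0) →
      (Algebra.trace L L' x' ∈ A ∧
        ((A : Set L) = {z : L | ∃ c : (L ≃ₐ[K] L) → K,
          (∀ g, c g ∈ integralClosure ℤ_[p] K) ∧
          z = ∑ g : L ≃ₐ[K] L, c g • g (Algebra.trace L L' x')}) ∧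
        ∀ g h : L ≃ₐ[K] L,
          Algebra.trace K L (g (Algebra.trace L L' x') * h (Algebra.trace L L' x')) =
            if g = h then 1 else 0) := by
  have : FiniteDimensional L L' := Module.Finite.of_restrictScalars_finite K L L'
  have hD : A * A = inverseDifferent ℤ_[p] K L := SetLike.ext hA
  have hD' : A' * A' = inverseDifferent ℤ_[p] K L' := SetLike.ext hA'
  have hunr : inverseDifferent ℤ_[p] L L' ≤ 1 := fun z hz =>
    Submodule.mem_one.mpr ⟨⟨z, (hunram z).mp hz⟩, rfl⟩
  obtain ⟨E, hE⟩ := exists_inverseDifferent_mul_eq_one ℤ_[p] ℚ_[p] K L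
  obtain ⟨E', hE'⟩ := exists_inverseDifferent_mul_eq_one ℤ_[p] ℚ_[p] K L'
  have hA'A : A' = extendedSpan L' A := by
    refine Submodule.eq_of_mul_self_eq_mul_self ?_ (hD' ▸ hE')
    rw [← extendedSpan_mul, hD, hD', inverseDifferent_eq_extendedSpan hunr hE]
  have htr : ∀ z ∈ A', Algebra.trace L L' z ∈ A := fun z hz => by
    have := trace_mul_mem_of_mem_extendedSpan (hA'A ▸ hz) 1 (one_mem _)
    rwa [mul_one] at this
  refine ⟨htr, by rw [hA'A]; rfl, fun x' hx' hA'orb hx'sd => ?_⟩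
  have hgx (g : L ≃ₐ[K] L) : g (Algebra.trace L L' x') ∈ A := by
    obtain ⟨σ, rfl⟩ := AlgEquiv.restrictNormalHom_surjective (F := K) (K₁ := L) (E := L') g
    have hσ : σ x' ∈ (A' : Set L') := hA'orb ▸ apply_mem_orbitSpan ℤ_[p] K x' σ
    have := htr _ hσ
    rwa [trace_algEquiv_apply] at this
  have hsd : IsSelfDual K L (Algebra.trace L L' x') := IsSelfDual.trace hx'sd
  exact ⟨htr x' hx', coe_eq_orbitSpan_of_isSelfDual hD.le hsd hgx, hsd⟩

/-- Let `K` be a `p`-adic field, `L/K` abelian of odd degree and weakly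
ramified, and `L'/L` finite unramified (encoded: the trace dual of `O_{L'}` over `L` is
`O_{L'}`) with `L'/K` abelian. With `A = A_{L/K}` and `A' = A_{L'/K}` the square roots of
the inverse differents, one has `Tr_{L'/L}(A') ⊆ A`, in fact `A' = A·O_{L'}`; consequently
if `x'` is a self-dual integral normal basis generator of `A'`, then `Tr_{L'/L}(x')` is a
self-dual integral normal basis generator of `A`. -/
theorem stmt_19 (p : ℕ) [Fact p.Prime]
    (K : Type*) [Field K] [Algebra ℚ_[p] K] [FiniteDimensional ℚ_[p] K]
    [Algebra ℤ_[p] K] [IsScalarTower ℤ_[p] ℚ_[p] K]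
    (L : Type*) [Field L] [Algebra K L] [FiniteDimensional K L] [IsGalois K L]
    [Algebra ℤ_[p] L] [IsScalarTower ℤ_[p] K L]
    (L' : Type*) [Field L'] [Algebra K L'] [Algebra L L'] [IsScalarTower K L L']
    [FiniteDimensional K L'] [IsGalois K L']
    [Algebra ℤ_[p] L'] [IsScalarTower ℤ_[p] K L'] [IsScalarTower ℤ_[p] L L']
    (hodd : Odd (Module.finrank K L))
    (hab : ∀ σ τ : L ≃ₐ[K] L, σ * τ = τ * σ)
    (hab' : ∀ σ τ : L' ≃ₐ[K] L', σ * τ = τ * σ)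
    -- `L'/L` is unramified: the trace dual of `O_{L'}` over `L` is `O_{L'}` itself
    (hunram : ∀ z : L',
      (∀ y : L', y ∈ integralClosure ℤ_[p] L' →
        Algebra.trace L L' (z * y) ∈ integralClosure ℤ_[p] L) ↔
      z ∈ integralClosure ℤ_[p] L')
    (A : Submodule (integralClosure ℤ_[p] L) L)
    (hA : ∀ z : L, z ∈ A * A ↔
      ∀ y : L, y ∈ integralClosure ℤ_[p] L →
        Algebra.trace K L (z * y) ∈ integralClosure ℤ_[p] K)
    (A' : Submodule (integralClosure ℤ_[p] L') L')
    (hA' : ∀ z : L', z ∈ A' * A' ↔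
      ∀ y : L', y ∈ integralClosure ℤ_[p] L' →
        Algebra.trace K L' (z * y) ∈ integralClosure ℤ_[p] K) :
    (∀ z : L', z ∈ A' → Algebra.trace L L' z ∈ A) ∧
    ((A' : Set L') =
      ↑(Submodule.span (integralClosure ℤ_[p] L') (algebraMap L L' '' (A : Set L)))) ∧
    ∀ x' : L', x' ∈ A' →
      ((A' : Set L') = {z : L' | ∃ c : (L' ≃ₐ[K] L') → K,
        (∀ g, c g ∈ integralClosure ℤ_[p] K) ∧
        z = ∑ g : L' ≃ₐ[K] L', c g • g x'}) →
      (∀ g h : L' ≃ₐ[K] L',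
        Algebra.trace K L' (g x' * h x') = if g = h then 1 else 0) →
      (Algebra.trace L L' x' ∈ A ∧
        ((A : Set L) = {z : L | ∃ c : (L ≃ₐ[K] L) → K,
          (∀ g, c g ∈ integralClosure ℤ_[p] K) ∧
          z = ∑ g : L ≃ₐ[K] L, c g • g (Algebra.trace L L' x')}) ∧
        ∀ g h : L ≃ₐ[K] L,
          Algebra.trace K L (g (Algebra.trace L L' x') * h (Algebra.trace L L' x')) =
            if g = h then 1 else 0) :=
  stmt_19_general p K L L' hunram A hA A' hA'
end
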